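/- Let E : C → S be a conditional expectation between commutative von Neumann algebras (unital positive projection with module property), extended to id⊗E on M₂(ℂ)⊗C. If Z ∈ M₂(ℂ)⊗S and C ∈ C is self-adjoint, and if the state ω = ρ⊗φ is invariant under id⊗E, then ω(Z*(I⊗C²)Z) ≥ ω(Z*((id⊗E)(I⊗C))²Z). In particular, replacing a pointer C by its conditional expectation E[C|S] does not increase the added variance of the measurement M(B) = (id⊗φ)(Z* (I⊗B) Z). -/

import Mathlib

open scoped ComplexOrder

/-- Complete positivity of a linear endomorphism of a star-ordered C*-algebra. -/
def IsCompletelyPositive {N : Type*} [NormedRing N] [StarRing N] [NormedAlgebra ℂ N]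
    [PartialOrder N] [StarOrderedRing N] (E : N →ₗ[ℂ] N) : Prop :=
  ∀ (n : ℕ) (a b : Fin n → N),
    0 ≤ ∑ i, ∑ j, star (b i) * E (star (a i) * a j) * b j

/-!
Applying complete positivity of `E` to the vectors `(c, 1)` and `(Z, -E(c) Z)` gives the
Kadison–Schwarz inequality `Z* E(c)² Z ≤ Z* E(c²) Z`. Positivity of `E` on `2 × 2`
blocks makes it preserve adjoints, so `Z*` is fixed by `E` together with `Z`, and the module
property turns `Z* E(c²) Z` into `E(Z* c² Z)`, which `ω` cannot tell apart from `Z* c² Z`.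
-/

theorem monotone_of_map_star_mul_self_nonneg {R M F : Type*} [NonUnitalRing R] [PartialOrder R]
    [StarRing R] [StarOrderedRing R] [AddCommGroup M] [PartialOrder M] [IsOrderedAddMonoid M]
    [FunLike F R M] [AddMonoidHomClass F R M] (f : F) (hf : ∀ a, 0 ≤ f (star a * a)) :
    Monotone f := by
  suffices h : ∀ p, 0 ≤ p → 0 ≤ f p by
    intro x y hxy
    simpa only [map_sub, sub_nonneg] using h _ (sub_nonneg.mpr hxy)
  intro p hp
  rw [StarOrderedRing.nonneg_iff] at hp
  induction hp using AddSubmonoid.closure_induction with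
  | mem _ h => obtain ⟨a, rfl⟩ := h; exact hf a
  | zero => simp
  | add _ _ _ _ ha hb => rw [map_add]; exact add_nonneg ha hb

theorem star_eq_of_forall_isSelfAdjoint_smul_add_smul {A : Type*} [AddCommGroup A] [Module ℂ A]
    [StarAddMonoid A] [StarModule ℂ A] {a b : A}
    (h : ∀ μ : ℂ, IsSelfAdjoint (μ • a + star μ • b)) : star a = b := by
  have h1 := (h 1).star_eq
  have hI := (h Complex.I).star_eq
  simp only [star_add, star_smul, star_one, one_smul, Complex.star_def, Complex.conj_I] at h1 hI
  linear_combination (norm := match_scalars <;> ring_nf <;> simp [Complex.I_sq])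
    (1 / 2 : ℂ) • h1 + (Complex.I / 2) • hI

namespace IsCompletelyPositive

variable {N : Type*} [NormedRing N] [StarRing N] [NormedAlgebra ℂ N] [PartialOrder N]
  [StarOrderedRing N] {E : N →ₗ[ℂ] N}

theorem map_star_mul_self_nonneg (hE : IsCompletelyPositive E) (a : N) :
    0 ≤ E (star a * a) := by
  simpa using hE 1 ![a] ![1]

theorem map_star [StarModule ℂ N] (hE : IsCompletelyPositive E) (x : N) :
    E (star x) = star (E x) := by
  refine (star_eq_of_forall_isSelfAdjoint_smul_add_smul fun μ ↦ ?_).symm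
  have hT := IsSelfAdjoint.of_nonneg (hE 2 ![1, x] ![1, μ • 1])
  have h1 := IsSelfAdjoint.of_nonneg (hE.map_star_mul_self_nonneg 1)
  have hP := (IsSelfAdjoint.star_mul_self μ).smul
    (IsSelfAdjoint.of_nonneg (hE.map_star_mul_self_nonneg x))
  convert (hT.sub h1).sub hP using 1
  simp only [RCLike.star_def, Fin.sum_univ_two, Matrix.cons_val_zero, Matrix.cons_val_one,
    Matrix.cons_val_fin_one, mul_one, one_mul, star_one, star_smul, Algebra.mul_smul_comm,
    Algebra.smul_mul_assoc]
  module

theorem star_mul_map_sq_mul_le (hE : IsCompletelyPositive E) (hE1 : E 1 = 1)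
    {c : N} (hc : IsSelfAdjoint c) (z : N) :
    star z * E c ^ 2 * z ≤ star z * E (c ^ 2) * z := by
  rw [← sub_nonneg]
  convert hE 2 ![c, 1] ![z, -(E c * z)] using 1
  simp only [Fin.sum_univ_two, Matrix.cons_val_zero, Matrix.cons_val_one, hc.star_eq, hE1,
    star_neg, star_mul, star_one, mul_one, one_mul, mul_neg, neg_mul, pow_two]
  noncomm_ring

end IsCompletelyPositive

/-- `N` models `M₂(ℂ) ⊗ C`, `E` models `id ⊗ E[·|S]`, `ω` the state `ρ ⊗ φ`, membership
`Z ∈ M₂(ℂ) ⊗ S` is encoded as `E Z = Z`, and `c` stands for the pointer `I ⊗ C`. -/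
theorem stmt_14_general {N : Type*} [NormedRing N] [StarRing N]
    [NormedAlgebra ℂ N] [StarModule ℂ N] [PartialOrder N] [StarOrderedRing N]
    (E : N →ₗ[ℂ] N) (hE1 : E 1 = 1) (hEcp : IsCompletelyPositive E)
    (hEmod : ∀ a₁ a₂ b : N, E a₁ = a₁ → E a₂ = a₂ → E (a₁ * b * a₂) = a₁ * E b * a₂)
    (ω : N →ₗ[ℂ] ℂ) (hωpos : ∀ a : N, 0 ≤ ω (star a * a))
    (hωinv : ∀ b : N, ω (E b) = ω b)
    (Z : N) (hZ : E Z = Z) (c : N) (hc : IsSelfAdjoint c) :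
    ω (star Z * (E c) ^ 2 * Z) ≤ ω (star Z * c ^ 2 * Z) := by
  have hZstar : E (star Z) = star Z := by rw [hEcp.map_star, hZ]
  calc ω (star Z * E c ^ 2 * Z) ≤ ω (star Z * E (c ^ 2) * Z) :=
        monotone_of_map_star_mul_self_nonneg ω hωpos (hEcp.star_mul_map_sq_mul_le hE1 hc Z)
    _ = ω (star Z * c ^ 2 * Z) := by rw [← hEmod _ _ _ hZstar hZ, hωinv]

/-- Conditional expectations do not increase the added variance: here `N` plays the
role of `M₂(ℂ) ⊗ C`, `E` the role of `id ⊗ E[·|S]` (a unital completely positive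
projection with the module property onto `M₂(ℂ) ⊗ S`), `ω` the role of the
`E`-invariant state `ρ ⊗ φ`, `Z ∈ M₂(ℂ) ⊗ S` (i.e. `E Z = Z`) and `c = I ⊗ C`
a self-adjoint pointer. -/
theorem stmt_14 {N : Type*} [NormedRing N] [StarRing N] [CStarRing N]
    [NormedAlgebra ℂ N] [StarModule ℂ N] [PartialOrder N] [StarOrderedRing N]
    (E : N →ₗ[ℂ] N) (hE1 : E 1 = 1) (hEcp : IsCompletelyPositive E)
    (hEproj : ∀ b : N, E (E b) = E b)
    (hEmod : ∀ a₁ a₂ b : N, E a₁ = a₁ → E a₂ = a₂ → E (a₁ * b * a₂) = a₁ * E b * a₂)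
    (ω : N →ₗ[ℂ] ℂ) (hωpos : ∀ a : N, 0 ≤ ω (star a * a)) (hω1 : ω 1 = 1)
    (hωinv : ∀ b : N, ω (E b) = ω b)
    (Z : N) (hZ : E Z = Z) (c : N) (hc : IsSelfAdjoint c) :
    ω (star Z * (E c) ^ 2 * Z) ≤ ω (star Z * c ^ 2 * Z) :=
  stmt_14_general E hE1 hEcp hEmod ω hωpos hωinv Z hZ c hc
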